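/- arXiv:2112.13290 — 3 statements merged into one kernel-verified Lean document; each statement's English description precedes it below -/
import Mathlib

section
/- If a commutative quantale Ω satisfies [v, w ⊗ u] = [v,w] ⊗ u for all v, w, u ∈ Ω, then Ω is trivial (⊥ = ⊤), i.e., Ω has exactly one element. -/
/-- If a commutative quantale satisfies `[v, w ⊗ u] = [v,w] ⊗ u` for all `v, w, u`,
then it is trivial: `⊥ = ⊤` and Ω has exactly one element. -/
theorem quantale_frobenius_implies_trivial
    (Ω : Type*) [CompleteLattice Ω]
    (mul : Ω → Ω → Ω) (e : Ω) (hom : Ω → Ω → Ω)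
    (hcomm : ∀ v w, mul v w = mul w v)
    (hassoc : ∀ u v w, mul (mul u v) w = mul u (mul v w))
    (hunit : ∀ v, mul e v = v)
    (hsup : ∀ (v : Ω) (s : Set Ω), mul v (sSup s) = ⨆ w ∈ s, mul v w)
    (hadj : ∀ v w u, mul v w ≤ u ↔ w ≤ hom v u)
    (hfrob : ∀ v w u : Ω, hom v (mul w u) = mul (hom v w) u) :
    (⊥ : Ω) = ⊤ ∧ ∀ x y : Ω, x = y := by
  have hbot : ∀ v : Ω, mul v ⊥ = ⊥ := by
    intro v
    have := hsup v ∅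
    simpa using this
  have hhombot : ∀ u : Ω, hom ⊥ u = ⊤ := by
    intro u
    refine le_antisymm le_top ?_
    rw [← hadj]
    rw [hcomm]
    simp [hbot]
  have key : (⊥ : Ω) = ⊤ := by
    have := hfrob ⊥ e ⊥
    rw [hunit, hhombot, hhombot, hbot] at this
    exact this.symm
  refine ⟨key, fun x y => le_antisymm ?_ ?_⟩ <;>
    exact le_top.trans (key.symm.le.trans bot_le)
end

section
/- Let Ω be a commutative quantale that is completely distributive as a lattice and in which [v, ⋁ᵢ wᵢ] = ⋁ᵢ [v, wᵢ] for every nonempty family. Let A be a cocomplete skeletal Ω-category (complete lattice with adjoint actions ∗ and ▷) that is completely distributive (i.e., satisfies ⋁_a (⋀_k [ψ(k), G(k)^↓(a)]) ∗ a = ⋀_k ψ(k) ▷ (⋁_a G(k)(a) ∗ a) for all ψ: K → Ω and G: K → Ω^A). Then A satisfies the choice-function distributivity law: ⋀_{k∈K} ψ(k) ▷ (⋁_{a∈A} G(k)(a) ∗ a) = ⋁_{f: K → A} ⋀_{k∈K} ψ(k) ▷ (G(k)(f k) ∗ f k). -/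
/-- Main theorem: if Ω is a commutative quantale that is completely distributive
as a lattice and whose internal homs `[v,-]` preserve nonempty joins, then every
completely distributive cocomplete skeletal Ω-category `A` (i.e. one satisfying
`⨆ₐ (⨅ₖ [ψ k, (G k)^↓ a]) ∗ a = ⨅ₖ ψ k ▷ (⨆ₐ G k a ∗ a)`) satisfies the
choice-function distributivity law
`⨅ₖ ψ k ▷ (⨆ₐ G k a ∗ a) = ⨆_{f : K → A} ⨅ₖ ψ k ▷ (G k (f k) ∗ f k)`. -/
theorem completely_distributive_choice_law
    (Ω : Type*) [CompletelyDistribLattice Ω]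
    (mul : Ω → Ω → Ω) (e : Ω) (hom : Ω → Ω → Ω)
    (hcomm : ∀ v w, mul v w = mul w v)
    (hassoc : ∀ u v w, mul (mul u v) w = mul u (mul v w))
    (hunit : ∀ v, mul e v = v)
    (hsupΩ : ∀ (v : Ω) (s : Set Ω), mul v (sSup s) = ⨆ w ∈ s, mul v w)
    (hadj : ∀ v w u, mul v w ≤ u ↔ w ≤ hom v u)
    (hhomsup : ∀ (v : Ω) (s : Set Ω), s.Nonempty → hom v (sSup s) = ⨆ w ∈ s, hom v w)
    (A : Type*) [CompleteLattice A]
    (star : Ω → A → A) (cot : Ω → A → A)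
    (hstar_unit : ∀ a, star e a = a)
    (hstar_assoc : ∀ v w a, star v (star w a) = star (mul v w) a)
    (hstar_sup₁ : ∀ (s : Set Ω) (a : A), star (sSup s) a = ⨆ v ∈ s, star v a)
    (hstar_sup₂ : ∀ (v : Ω) (s : Set A), star v (sSup s) = ⨆ a ∈ s, star v a)
    (hcot : ∀ v a b, star v a ≤ b ↔ a ≤ cot v b)
    (hAcd : ∀ (K : Type) (ψ : K → Ω) (G : K → A → Ω),
      (⨆ a : A, star (⨅ k, hom (ψ k)
          (⨆ b : A, mul (G k b) (sSup {v : Ω | star v a ≤ b}))) a)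
        = ⨅ k, cot (ψ k) (⨆ a : A, star (G k a) a)) :
    ∀ (K : Type) (ψ : K → Ω) (G : K → A → Ω),
      (⨅ k, cot (ψ k) (⨆ a : A, star (G k a) a))
        = ⨆ f : K → A, ⨅ k, cot (ψ k) (star (G k (f k)) (f k)) := by
  intro K ψ G
  -- star is monotone in its Ω argument
  have hstarΩmono : ∀ (v w : Ω) (a : A), v ≤ w → star v a ≤ star w a := by
    intro v w a hvw
    have h := hstar_sup₁ {v, w} a
    rw [sSup_pair, iSup_pair, sup_eq_right.mpr hvw] at h
    rw [h]; exact le_sup_left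
  -- star is monotone in its A argument
  have hstarAmono : ∀ (v : Ω) (a b : A), a ≤ b → star v a ≤ star v b := by
    intro v a b hab
    have h := hstar_sup₂ v {a, b}
    rw [sSup_pair, iSup_pair, sup_eq_right.mpr hab] at h
    rw [h]; exact le_sup_left
  -- cot is monotone in its A argument
  have hcotmono : ∀ (v : Ω) (a b : A), a ≤ b → cot v a ≤ cot v b := by
    intro v a b hab
    exact (hcot v _ b).mp (le_trans ((hcot v _ a).mpr le_rfl) hab)
  apply le_antisymm
  · rw [← hAcd K ψ G]
    apply iSup_le; intro a
    -- rewrite the inner hom of sup as sup of homs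
    have h1 : ∀ k, hom (ψ k) (⨆ b : A, mul (G k b) (sSup {v : Ω | star v a ≤ b}))
        = ⨆ b : A, hom (ψ k) (mul (G k b) (sSup {v : Ω | star v a ≤ b})) := by
      intro k
      have := hhomsup (ψ k)
        (Set.range (fun b : A => mul (G k b) (sSup {v : Ω | star v a ≤ b})))
        (Set.range_nonempty _)
      rw [← sSup_range, this, iSup_range]
    calc star (⨅ k, hom (ψ k)
          (⨆ b : A, mul (G k b) (sSup {v : Ω | star v a ≤ b}))) a
        = star (⨆ f : K → A, ⨅ k,
            hom (ψ k) (mul (G k (f k)) (sSup {v : Ω | star v a ≤ f k}))) a := by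
          rw [iInf_congr h1, iInf_iSup_eq]
      _ ≤ ⨆ f : K → A, ⨅ k, cot (ψ k) (star (G k (f k)) (f k)) := by
          rw [← sSup_range, hstar_sup₁, iSup_range]
          apply iSup_le; intro f
          refine le_trans ?_ (le_iSup _ f)
          apply le_iInf; intro k
          have h2 : star (⨅ k', hom (ψ k')
              (mul (G k' (f k')) (sSup {v : Ω | star v a ≤ f k'}))) a
              ≤ star (hom (ψ k) (mul (G k (f k)) (sSup {v : Ω | star v a ≤ f k}))) a :=
            hstarΩmono _ _ _ (iInf_le _ k)
          refine le_trans h2 ?_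
          apply (hcot _ _ _).mp
          rw [hstar_assoc]
          have h3 : mul (ψ k) (hom (ψ k)
              (mul (G k (f k)) (sSup {v : Ω | star v a ≤ f k})))
              ≤ mul (G k (f k)) (sSup {v : Ω | star v a ≤ f k}) :=
            (hadj _ _ _).mpr le_rfl
          refine le_trans (hstarΩmono _ _ _ h3) ?_
          rw [← hstar_assoc]
          apply hstarAmono
          rw [hstar_sup₁]
          exact iSup_le fun v => iSup_le fun hv => hv
  · apply iSup_le; intro f
    apply le_iInf; intro k
    refine le_trans (iInf_le _ k) ?_
    exact hcotmono _ _ _ (le_iSup (fun b : A => star (G k b) b) (f k))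
end

section
/- Let Ω be a commutative quantale and A a cocomplete skeletal Ω-category satisfying the enriched distributivity law ⋀_k ψ(k) ▷ (⋁_a G(k)(a) ∗ a) = ⋁_{f:K→A} ⋀_k ψ(k) ▷ (G(k)(f k) ∗ f k). Then the underlying complete lattice of A is completely distributive: for any family of subsets (A_k)_{k∈K} of A, ⋀_{k∈K} ⋁ A_k = ⋁_{f: choice functions with f(k)∈A_k} ⋀_{k∈K} f(k). -/
/-- If a cocomplete skeletal Ω-category satisfies the enriched distributivity
law, then its underlying complete lattice is completely distributive:
`⨅ₖ ⨆ Aₖ = ⨆_{choice f} ⨅ₖ f k`. -/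
theorem enriched_distributivity_implies_lattice_cd
    (Ω : Type*) [CompleteLattice Ω]
    (mul : Ω → Ω → Ω) (e : Ω)
    (hcomm : ∀ v w, mul v w = mul w v)
    (hassoc : ∀ u v w, mul (mul u v) w = mul u (mul v w))
    (hunit : ∀ v, mul e v = v)
    (hsupΩ : ∀ (v : Ω) (s : Set Ω), mul v (sSup s) = ⨆ w ∈ s, mul v w)
    (A : Type*) [CompleteLattice A]
    (star : Ω → A → A) (cot : Ω → A → A)
    (hstar_unit : ∀ a, star e a = a)
    (hstar_assoc : ∀ v w a, star v (star w a) = star (mul v w) a)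
    (hstar_sup₁ : ∀ (s : Set Ω) (a : A), star (sSup s) a = ⨆ v ∈ s, star v a)
    (hstar_sup₂ : ∀ (v : Ω) (s : Set A), star v (sSup s) = ⨆ a ∈ s, star v a)
    (hcot : ∀ v a b, star v a ≤ b ↔ a ≤ cot v b)
    (hlaw : ∀ (K : Type) (ψ : K → Ω) (G : K → A → Ω),
      (⨅ k, cot (ψ k) (⨆ a : A, star (G k a) a))
        = ⨆ f : K → A, ⨅ k, cot (ψ k) (star (G k (f k)) (f k))) :
    ∀ (K : Type) (S : K → Set A),
      (⨅ k, sSup (S k))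
        = ⨆ f : {f : K → A // ∀ k, f k ∈ S k}, ⨅ k, f.1 k := by
  intro K S
  classical
  have hbot : ∀ a, star ⊥ a = ⊥ := by
    intro a
    have := hstar_sup₁ ∅ a
    simpa using this
  have hcote : ∀ b : A, cot e b = b := by
    intro b
    apply le_antisymm
    · have := (hcot e (cot e b) b).2 le_rfl
      simpa [hstar_unit] using this
    · exact (hcot e b b).1 (by simp [hstar_unit])
  have key := hlaw K (fun _ => e) (fun k a => if a ∈ S k then e else ⊥)
  simp only [hcote] at key
  have lhs : ∀ k, (⨆ a : A, star (if a ∈ S k then e else ⊥) a) = sSup (S k) := by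
    intro k
    apply le_antisymm
    · apply iSup_le; intro a
      by_cases h : a ∈ S k
      · simpa [h, hstar_unit] using le_sSup h
      · simp [h, hbot]
    · apply sSup_le; intro a ha
      have h : star (if a ∈ S k then e else ⊥) a = a := by simp [ha, hstar_unit]
      exact h ▸ le_iSup (fun a => star (if a ∈ S k then e else ⊥) a) a
  have : (⨅ k, sSup (S k)) = ⨅ k, ⨆ a : A, star (if a ∈ S k then e else ⊥) a := by
    simp [lhs]
  rw [this, key]
  apply le_antisymm
  · apply iSup_le; intro f
    by_cases hf : ∀ k, f k ∈ S k
    · refine le_trans ?_ (le_iSup _ ⟨f, hf⟩)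
      apply le_iInf; intro k
      have h : star (if f k ∈ S k then e else ⊥) (f k) = f k := by
        simp [hf k, hstar_unit]
      exact le_trans (iInf_le _ k) (le_of_eq h)
    · push_neg at hf
      obtain ⟨k, hk⟩ := hf
      refine le_trans (le_trans (iInf_le _ k) ?_) bot_le
      simp [hk, hbot]
  · apply iSup_le; intro f
    refine le_trans ?_ (le_iSup _ f.1)
    apply le_iInf; intro k
    have h : star (if f.1 k ∈ S k then e else ⊥) (f.1 k) = f.1 k := by
      simp [f.2 k, hstar_unit]
    exact le_trans (iInf_le _ k) (ge_of_eq h)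
end
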